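/- arXiv:2201.06214 — 2 statements merged into one kernel-verified Lean document; each statement's English description precedes it below -/
import Mathlib

section
/- For $\eta \in (0,1)$, let $r_i = \eta/(1-\eta)$ and $r_o = 1/(1-\eta)$ (so that $r_o - r_i = 1$ and $r_i/r_o = \eta$). Consider the function $F(\Lambda, h_i, h_o, a) = \frac{2}{a(2-a)(r_o^2 - r_i^2)}\left(\frac{(1-\Lambda r_i)^2 r_i}{h_i} + \frac{\Lambda^2 r_o^3}{h_o}\right)$ minimized over $\Lambda \in \mathbb{R}$, $h_i, h_o > 0$, $a \in (0,2)$ subject to the constraint $\max\left\{\frac{h_i}{4}|1 - \Lambda r_i|, \frac{h_o}{4}|\Lambda| r_o\right\} \le 1 - \frac{a}{2}$. The minimum value is $\frac{27}{32}\frac{\eta}{(1+\eta)(1+\eta^2)^2}$, attained at $\Lambda = \frac{r_i}{r_i^2 + r_o^2}$, $a = \frac{2}{3}$, $h_o = \frac{8}{3\Lambda r_o}$, and $h_i/h_o = \eta$. -/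
private lemma aux_e1 (s r h a : ℝ) (hr : 0 < r) (hh : 0 < h)
    (h2a : 0 < 2 - a) (hc : h * s ≤ 2*(2-a)) :
    s^3*r/(2*(2-a)) ≤ s^2*r/h := by
  rw [div_le_div_iff₀ (by positivity) hh]
  nlinarith [mul_le_mul_of_nonneg_left hc (mul_nonneg (sq_nonneg s) hr.le)]

private lemma aux_e2 (t ro h a : ℝ) (hro : 0 < ro) (hh : 0 < h)
    (h2a : 0 < 2 - a) (hc : h * (t*ro) ≤ 2*(2-a)) :
    t^3*ro^4/(2*(2-a)) ≤ t^2*ro^3/h := by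
  rw [div_le_div_iff₀ (by positivity) hh]
  nlinarith [mul_le_mul_of_nonneg_left hc (mul_nonneg (sq_nonneg t) (by positivity : (0:ℝ) ≤ ro^3))]

private lemma aux_e3 (s t ri ro : ℝ) (hs : 0 ≤ s) (ht : 0 ≤ t)
    (hri : 0 < ri) (hro : 0 < ro) (hst : 1 ≤ s + ri*t) :
    ri*ro^4/(ri^2+ro^2)^2 ≤ s^3*ri + t^3*ro^4 := by
  have hKpos : 0 < ri^2 + ro^2 := by positivity
  set K : ℝ := ri^2 + ro^2 with hKdef
  have hA : 0 ≤ (s*K - ro^2)^2*(s*K + 2*ro^2)*ri := by positivity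
  have hB : 0 ≤ (t*K - ri)^2*(t*K + 2*ri)*ro^4 := by positivity
  have hC : 0 ≤ 3*ri*ro^4*K*(s + ri*t - 1) :=
    mul_nonneg (by positivity) (by linarith)
  have hiden : (s^3*ri + t^3*ro^4)*K^3 - ri*ro^4*K
      = (s*K - ro^2)^2*(s*K + 2*ro^2)*ri + (t*K - ri)^2*(t*K + 2*ri)*ro^4
        + 3*ri*ro^4*K*(s + ri*t - 1) := by ring
  have key : ri*ro^4*K ≤ (s^3*ri + t^3*ro^4)*K^3 := by linarith
  rw [div_le_iff₀ (by positivity)]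
  exact le_of_mul_le_mul_right (by nlinarith [key]) hKpos

private lemma aux_step2 (x y D b : ℝ) (hb : b ≠ 0) (h2b : (2:ℝ) - b ≠ 0) (hD : D ≠ 0) :
    2/(b*(2-b)*D) * (x/(2*(2-b)) + y/(2*(2-b))) = (x+y)/(b*(2-b)^2*D) := by
  field_simp

private lemma aux_final (η : ℝ) (h0 : 0 < η) (h1 : η < 1) :
    27/32 * η/((1+η)*(1+η^2)^2)
      = ((η/(1-η))*(1/(1-η))^4/((η/(1-η))^2+(1/(1-η))^2)^2)/((32/27)*((1/(1-η))^2-(η/(1-η))^2)) := by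
  have h1η : (0:ℝ) < 1 - η := by linarith
  have h2 : (0:ℝ) < 1 + η := by linarith
  have h3 : (0:ℝ) < 1 + η^2 := by positivity
  have e1 : (η/(1-η))^2+(1/(1-η))^2 = (1+η^2)/(1-η)^2 := by field_simp; ring
  have e2 : (1/(1-η))^2-(η/(1-η))^2 = (1+η)*(1-η)/(1-η)^2 := by field_simp; ring
  rw [e1, e2]
  rw [div_eq_div_iff (by positivity) (by positivity)]
  field_simp

private lemma aux_e4 (a : ℝ) (h0 : 0 < a) (h2 : a < 2) : a*(2-a)^2 ≤ 32/27 := by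
  nlinarith [mul_nonneg (sq_nonneg (a - 2/3)) (by linarith : (0:ℝ) ≤ 8/3 - a)]

/-- The constrained optimization of the analytical dissipation bound: the optimum of
`F(Λ, h_i, h_o, a)` subject to the spectral constraint
`max{h_i|1-Λr_i|/4, h_o|Λ|r_o/4} ≤ 1 - a/2` equals `(27/32) η/((1+η)(1+η²)²)`,
attained at `Λ = r_i/(r_i²+r_o²)`, `a = 2/3`, `h_o = 8/(3Λr_o)`, `h_i = η h_o`. -/
theorem analytical_bound_optimization (η : ℝ) (hη : η ∈ Set.Ioo (0:ℝ) 1) :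
    let ri : ℝ := η/(1-η)
    let ro : ℝ := 1/(1-η)
    let F : ℝ → ℝ → ℝ → ℝ → ℝ := fun Λ hi ho a =>
      2/(a*(2-a)*(ro^2 - ri^2)) * ((1 - Λ*ri)^2*ri/hi + Λ^2*ro^3/ho)
    let Λ : ℝ := ri/(ri^2 + ro^2)
    let a : ℝ := 2/3
    let ho : ℝ := 8/(3*Λ*ro)
    let hi : ℝ := η*ho
    (0 < hi ∧ 0 < ho ∧ a ∈ Set.Ioo (0:ℝ) 2 ∧
      max (hi/4 * |1 - Λ*ri|) (ho/4 * (|Λ| * ro)) ≤ 1 - a/2 ∧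
      F Λ hi ho a = 27/32 * η/((1+η)*(1+η^2)^2)) ∧
    (∀ Λ' hi' ho' a' : ℝ, 0 < hi' → 0 < ho' → a' ∈ Set.Ioo (0:ℝ) 2 →
      max (hi'/4 * |1 - Λ'*ri|) (ho'/4 * (|Λ'| * ro)) ≤ 1 - a'/2 →
      27/32 * η/((1+η)*(1+η^2)^2) ≤ F Λ' hi' ho' a') := by
  obtain ⟨hη0, hη1⟩ := hη
  intro ri ro F Λ a ho hi
  have h1η : (0:ℝ) < 1 - η := by linarith
  have hri : ri = η/(1-η) := rfl
  have hro : ro = 1/(1-η) := rfl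
  have hΛd : Λ = ri/(ri^2+ro^2) := rfl
  have had : a = (2:ℝ)/3 := rfl
  have hhod : ho = 8/(3*Λ*ro) := rfl
  have hhid : hi = η*ho := rfl
  have hFd : ∀ L x y b : ℝ, F L x y b
      = 2/(b*(2-b)*(ro^2 - ri^2)) * ((1 - L*ri)^2*ri/x + L^2*ro^3/y) := fun _ _ _ _ => rfl
  clear_value ri ro F Λ a ho hi
  have hripos : 0 < ri := by rw [hri]; positivity
  have hropos : 0 < ro := by rw [hro]; positivity
  have hη2 : (0:ℝ) < 1 + η^2 := by positivity
  have hKpos : 0 < ri^2 + ro^2 := by positivity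
  have hΛval : Λ = η*(1-η)/(1+η^2) := by
    rw [hΛd, hri, hro]; field_simp; ring
  have hΛpos : 0 < Λ := by rw [hΛval]; positivity
  have hsub : ro - ri = 1 := by rw [hri, hro]; field_simp
  have hlt : ri < ro := by linarith
  have hD : 0 < ro^2 - ri^2 := by nlinarith
  have hoval : ho = 8*(1+η^2)/(3*η) := by
    rw [hhod, hΛval, hro]; field_simp
  have hival : hi = 8*(1+η^2)/3 := by
    rw [hhid, hoval]; field_simp
  have hDval : ro^2 - ri^2 = (1+η)/(1-η) := by
    rw [hri, hro]; field_simp; ring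
  have h1 : 1 - Λ*ri = 1/(1+η^2) := by
    rw [hΛval, hri]; field_simp; ring
  constructor
  · refine ⟨by rw [hival]; positivity, by rw [hoval]; positivity,
      ⟨by norm_num [had], by norm_num [had]⟩, ?_, ?_⟩
    · have habs1 : |1 - Λ*ri| = 1/(1+η^2) := by
        rw [h1]; exact abs_of_pos (by positivity)
      have habs2 : |Λ| = Λ := abs_of_pos hΛpos
      have e1 : hi/4 * |1 - Λ*ri| = 2/3 := by
        rw [habs1, hival]; field_simp; ring
      have e2 : ho/4 * (|Λ| * ro) = 2/3 := by
        rw [habs2, hoval, hΛval, hro]; field_simp; ring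
      rw [e1, e2, had]; norm_num
    · have hterm1 : (1 - Λ*ri)^2*ri/hi = 3*η/(8*(1-η)*(1+η^2)^3) := by
        rw [h1, hri, hival]; field_simp
      have hterm2 : Λ^2*ro^3/ho = 3*η^3/(8*(1-η)*(1+η^2)^3) := by
        rw [hΛval, hro, hoval]; field_simp
      rw [hFd, hterm1, hterm2, hDval, had]
      have hη1' : (0:ℝ) < 1 + η := by linarith
      field_simp
      ring
  · intro Λ' hi' ho' a' hhi' hho' ha' hcon
    obtain ⟨ha0, ha2⟩ := ha'
    have h2a : 0 < 2 - a' := by linarith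
    set s : ℝ := |1 - Λ'*ri| with hsdef
    set t : ℝ := |Λ'| with htdef
    have hs : 0 ≤ s := abs_nonneg _
    have ht : 0 ≤ t := abs_nonneg _
    have hst : 1 ≤ s + ri*t := by
      have h := abs_add_le (1 - Λ'*ri) (Λ'*ri)
      simp only [sub_add_cancel, abs_one] at h
      calc (1:ℝ) ≤ s + |Λ'*ri| := h
        _ = s + ri*t := by rw [abs_mul, abs_of_pos hripos]; ring
    have hc1 : hi' * s ≤ 2*(2-a') := by
      have h := le_trans (le_max_left _ _) hcon
      have h' : hi'/4 * s = hi' * s / 4 := by ring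
      rw [h'] at h; linarith
    have hc2 : ho' * (t*ro) ≤ 2*(2-a') := by
      have h := le_trans (le_max_right _ _) hcon
      have h' : ho'/4 * (t*ro) = ho' * (t*ro) / 4 := by ring
      rw [h'] at h; linarith
    have e1 : s^3*ri/(2*(2-a')) ≤ s^2*ri/hi' := aux_e1 s ri hi' a' hripos hhi' h2a hc1
    have e2 : t^3*ro^4/(2*(2-a')) ≤ t^2*ro^3/ho' := aux_e2 t ro ho' a' hropos hho' h2a hc2
    have e3 : ri*ro^4/(ri^2+ro^2)^2 ≤ s^3*ri + t^3*ro^4 :=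
      aux_e3 s t ri ro hs ht hripos hropos hst
    have e4 : a'*(2-a')^2 ≤ 32/27 := aux_e4 a' ha0 ha2
    have hFval : F Λ' hi' ho' a'
        = 2/(a'*(2-a')*(ro^2-ri^2)) * (s^2*ri/hi' + t^2*ro^3/ho') := by
      rw [hFd, hsdef, htdef, sq_abs, sq_abs]
    have step1 : 2/(a'*(2-a')*(ro^2-ri^2)) * (s^3*ri/(2*(2-a')) + t^3*ro^4/(2*(2-a')))
        ≤ F Λ' hi' ho' a' := by
      rw [hFval]
      apply mul_le_mul_of_nonneg_left (add_le_add e1 e2) (by positivity)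
    have step2 : 2/(a'*(2-a')*(ro^2-ri^2)) * (s^3*ri/(2*(2-a')) + t^3*ro^4/(2*(2-a')))
        = (s^3*ri + t^3*ro^4)/(a'*(2-a')^2*(ro^2-ri^2)) :=
      aux_step2 _ _ _ _ (ne_of_gt ha0) (ne_of_gt h2a) (ne_of_gt hD)
    have step3 : (ri*ro^4/(ri^2+ro^2)^2)/((32/27)*(ro^2-ri^2))
        ≤ (s^3*ri + t^3*ro^4)/(a'*(2-a')^2*(ro^2-ri^2)) := by
      apply div_le_div₀ (by positivity) e3 (by positivity)
      exact mul_le_mul_of_nonneg_right e4 hD.le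
    have final : 27/32 * η/((1+η)*(1+η^2)^2)
        = (ri*ro^4/(ri^2+ro^2)^2)/((32/27)*(ro^2-ri^2)) := by
      rw [hri, hro]; exact aux_final η hη0 hη1
    rw [final]
    calc (ri*ro^4/(ri^2+ro^2)^2)/((32/27)*(ro^2-ri^2))
        ≤ (s^3*ri + t^3*ro^4)/(a'*(2-a')^2*(ro^2-ri^2)) := step3
      _ = _ := step2.symm
      _ ≤ F Λ' hi' ho' a' := step1
end

section
/- Let $r_o > r_i > 0$ with $r_o = r_i + 1$. If $Re > \frac{5r_i^2 + 5r_o^2 + 2}{2r_i}$, then for the perturbation $\tilde{\mathbf{v}} = (0, v_0\, r(r-r_i)(r-r_o))$ with $v_0 \ne 0$, the quadratic part of the spectral functional satisfies $\frac{1}{2Re}\|\nabla\tilde{\mathbf{v}}\|_2^2 + \int_V \tilde{\mathbf{v}}\cdot\nabla\mathbf{U}\cdot\tilde{\mathbf{v}}\,d\mathbf{x} < 0$ for every divergence-free background flow $\mathbf{U}$ satisfying the suction boundary conditions $U_r(r_i,\theta) = -1$, $U_r(r_o,\theta) = -r_i/r_o$. -/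
open Real MeasureTheory intervalIntegral

/-- Fubini for interval integrals of continuous functions. -/
lemma cont_integral_swap (f : ℝ → ℝ → ℝ) (hf : Continuous fun p : ℝ × ℝ => f p.1 p.2)
    (a b c d : ℝ) (hab : a ≤ b) (hcd : c ≤ d) :
    (∫ x in a..b, ∫ y in c..d, f x y) = ∫ y in c..d, ∫ x in a..b, f x y := by
  rw [intervalIntegral.integral_of_le hab]
  simp_rw [intervalIntegral.integral_of_le hcd, intervalIntegral.integral_of_le hab]
  apply MeasureTheory.integral_integral_swap
  have h1 : (volume.restrict (Set.Ioc a b)).prod (volume.restrict (Set.Ioc c d))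
      = (volume : Measure (ℝ × ℝ)).restrict (Set.Ioc a b ×ˢ Set.Ioc c d) := by
    rw [Measure.prod_restrict, ← Measure.volume_eq_prod]
  rw [Function.uncurry_def, h1]
  have hK : IsCompact (Set.Icc a b ×ˢ Set.Icc c d) := isCompact_Icc.prod isCompact_Icc
  have h2 : IntegrableOn (fun p : ℝ × ℝ => f p.1 p.2) (Set.Icc a b ×ˢ Set.Icc c d) volume :=
    hf.continuousOn.integrableOn_compact hK
  exact h2.mono_set (Set.prod_mono Set.Ioc_subset_Icc_self Set.Ioc_subset_Icc_self)

/-- Evaluation of a polynomial interval integral. -/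
lemma integral_poly_eval (a b c1 c2 c3 c4 c5 c6 : ℝ) :
    (∫ r in a..b, (c1 + 2*c2*r + 3*c3*r^2 + 4*c4*r^3 + 5*c5*r^4 + 6*c6*r^5))
      = (c1*b + c2*b^2 + c3*b^3 + c4*b^4 + c5*b^5 + c6*b^6)
        - (c1*a + c2*a^2 + c3*a^3 + c4*a^4 + c5*a^5 + c6*a^6) := by
  apply intervalIntegral.integral_eq_sub_of_hasDerivAt
  · intro x _
    have H : HasDerivAt
        (fun r : ℝ => c1*r + c2*r^2 + c3*r^3 + c4*r^4 + c5*r^5 + c6*r^6)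
        (c1*1 + c2*((2:ℕ)*x^(2-1)) + c3*((3:ℕ)*x^(3-1)) + c4*((4:ℕ)*x^(4-1))
          + c5*((5:ℕ)*x^(5-1)) + c6*((6:ℕ)*x^(6-1))) x :=
      ((((((hasDerivAt_id x).const_mul c1).add
        ((hasDerivAt_pow 2 x).const_mul c2)).add
        ((hasDerivAt_pow 3 x).const_mul c3)).add
        ((hasDerivAt_pow 4 x).const_mul c4)).add
        ((hasDerivAt_pow 5 x).const_mul c5)).add
        ((hasDerivAt_pow 6 x).const_mul c6)
    refine H.congr_deriv ?_
    push_cast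
    ring
  · apply Continuous.intervalIntegrable
    continuity

set_option maxHeartbeats 2000000 in
/-- Failure of the background method for Taylor–Couette flow with suction: above the
Reynolds number `(5r_i²+5r_o²+2)/(2r_i)`, the quadratic part of the spectral functional
evaluated at the perturbation `ṽ = (0, v₀ r(r-r_i)(r-r_o))` is negative for every
admissible divergence-free background flow satisfying the suction boundary
conditions. -/
theorem background_method_fails_for_suction
    (ri ro Re v0 : ℝ) (hri : 0 < ri) (hgap : ro = ri + 1) (hv0 : v0 ≠ 0)
    (hRe : Re > (5*ri^2 + 5*ro^2 + 2)/(2*ri))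
    (Ur Uθ : ℝ → ℝ → ℝ)
    (hUr : ContDiff ℝ 1 (fun p : ℝ × ℝ => Ur p.1 p.2))
    (hUθ : ContDiff ℝ 1 (fun p : ℝ × ℝ => Uθ p.1 p.2))
    (hdiv : ∀ r θ, r ∈ Set.Icc ri ro →
      deriv (fun r' => r' * Ur r' θ) r / r + deriv (fun θ' => Uθ r θ') θ / r = 0)
    (hper : ∀ r θ, Ur r (θ + 2*π) = Ur r θ ∧ Uθ r (θ + 2*π) = Uθ r θ)
    (hbci : ∀ θ, Ur ri θ = -1)
    (hbco : ∀ θ, Ur ro θ = -(ri/ro)) :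
    1/(2*Re) * (2*π * ∫ r in ri..ro,
        ((deriv (fun s => v0*s*(s - ri)*(s - ro)) r)^2
          + (v0*r*(r - ri)*(r - ro))^2/r^2) * r)
      + (∫ r in ri..ro, (v0*r*(r - ri)*(r - ro))^2 *
          (∫ θ in (0:ℝ)..(2*π),
            deriv (fun θ' => Uθ r θ') θ / r + Ur r θ / r) * r) < 0 := by
  have hab : ri < ro := by rw [hgap]; linarith
  have hab' : ri ≤ ro := le_of_lt hab
  have hπ : (0:ℝ) < π := pi_pos
  have h2π : (0:ℝ) ≤ 2*π := by linarith
  have hRe0 : (0:ℝ) < Re := by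
    have : (0:ℝ) < (5*ri^2 + 5*ro^2 + 2)/(2*ri) := by positivity
    linarith
  set Dθ : ℝ → ℝ → ℝ := fun r θ => fderiv ℝ (fun p : ℝ × ℝ => Uθ p.1 p.2) (r, θ) (0, 1)
    with hDθdef
  set Dr : ℝ → ℝ → ℝ :=
      fun r θ => Ur r θ + r * fderiv ℝ (fun p : ℝ × ℝ => Ur p.1 p.2) (r, θ) (1, 0)
    with hDrdef
  have hDθ : ∀ r θ, HasDerivAt (fun θ' => Uθ r θ') (Dθ r θ) θ := by
    intro r θ
    have hline : HasDerivAt (fun θ' : ℝ => ((r, θ') : ℝ × ℝ)) ((0 : ℝ), (1 : ℝ)) θ :=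
      (hasDerivAt_const θ r).prodMk (hasDerivAt_id θ)
    exact (((hUθ.differentiable one_ne_zero) (r, θ)).hasFDerivAt).comp_hasDerivAt θ hline
  have hDr : ∀ r θ, HasDerivAt (fun r' => r' * Ur r' θ) (Dr r θ) r := by
    intro r θ
    have hline : HasDerivAt (fun r' : ℝ => ((r', θ) : ℝ × ℝ)) ((1 : ℝ), (0 : ℝ)) r :=
      (hasDerivAt_id r).prodMk (hasDerivAt_const r θ)
    have hU : HasDerivAt (fun r' => Ur r' θ)
        (fderiv ℝ (fun p : ℝ × ℝ => Ur p.1 p.2) (r, θ) (1, 0)) r :=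
      by have := (((hUr.differentiable one_ne_zero) (r, θ)).hasFDerivAt).comp_hasDerivAt r hline; exact this
    have h := (hasDerivAt_id r).mul hU
    have heq : (1:ℝ) * Ur r θ + r * fderiv ℝ (fun p : ℝ × ℝ => Ur p.1 p.2) (r, θ) (1, 0)
        = Dr r θ := by rw [hDrdef]; ring
    rw [← heq]
    exact h
  have contDθ : Continuous fun p : ℝ × ℝ => Dθ p.1 p.2 := by
    have h1 : Continuous (fderiv ℝ (fun p : ℝ × ℝ => Uθ p.1 p.2)) :=
      hUθ.continuous_fderiv one_ne_zero
    exact h1.clm_apply continuous_const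
  have contDr : Continuous fun p : ℝ × ℝ => Dr p.1 p.2 := by
    have h1 : Continuous (fderiv ℝ (fun p : ℝ × ℝ => Ur p.1 p.2)) :=
      hUr.continuous_fderiv one_ne_zero
    exact hUr.continuous.add (continuous_fst.mul (h1.clm_apply continuous_const))
  -- FTC in θ : the integral of Dθ vanishes by periodicity
  have hzero : ∀ r, (∫ θ in (0:ℝ)..(2*π), Dθ r θ) = 0 := by
    intro r
    have hint : IntervalIntegrable (fun θ => Dθ r θ) volume 0 (2*π) :=
      (contDθ.comp (Continuous.prodMk_right r)).intervalIntegrable 0 (2*π)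
    rw [intervalIntegral.integral_eq_sub_of_hasDerivAt (fun θ _ => hDθ r θ) hint]
    have h := (hper r 0).2
    rw [zero_add] at h
    rw [h, sub_self]
  -- mass conservation : the θ-integral of Ur
  have hUrInt : ∀ r ∈ Set.Icc ri ro, (∫ θ in (0:ℝ)..(2*π), Ur r θ) = -(2*π*ri)/r := by
    intro r hr
    have hr0 : (0:ℝ) < r := lt_of_lt_of_le hri hr.1
    have hFTCr : ∀ θ, r * Ur r θ - ri * Ur ri θ = ∫ s in ri..r, Dr s θ := by
      intro θ
      have hint : IntervalIntegrable (fun s => Dr s θ) volume ri r :=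
        (contDr.comp (continuous_id.prodMk continuous_const)).intervalIntegrable ri r
      rw [intervalIntegral.integral_eq_sub_of_hasDerivAt (fun s _ => hDr s θ) hint]
    have hDrDθ : ∀ s ∈ Set.uIcc ri r, ∀ θ, Dr s θ = -Dθ s θ := by
      intro s hs θ
      have hs' : s ∈ Set.Icc ri ro := by
        rw [Set.uIcc_of_le hr.1] at hs
        exact ⟨hs.1, le_trans hs.2 hr.2⟩
      have hs0 : s ≠ 0 := ne_of_gt (lt_of_lt_of_le hri hs'.1)
      have hd := hdiv s θ hs'
      rw [(hDr s θ).deriv, (hDθ s θ).deriv] at hd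
      field_simp at hd
      linarith
    have key : (∫ θ in (0:ℝ)..(2*π), ∫ s in ri..r, Dr s θ) = 0 := by
      have h1 : (∫ θ in (0:ℝ)..(2*π), ∫ s in ri..r, Dr s θ)
          = ∫ θ in (0:ℝ)..(2*π), ∫ s in ri..r, -Dθ s θ := by
        apply intervalIntegral.integral_congr
        intro θ _
        exact intervalIntegral.integral_congr (fun s hs => hDrDθ s hs θ)
      rw [h1]
      have h2 : (∫ θ in (0:ℝ)..(2*π), ∫ s in ri..r, -Dθ s θ)
          = ∫ s in ri..r, ∫ θ in (0:ℝ)..(2*π), -Dθ s θ := by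
        apply cont_integral_swap (fun θ s => -Dθ s θ) _ 0 (2*π) ri r h2π hr.1
        exact (contDθ.comp (continuous_snd.prodMk continuous_fst)).neg
      rw [h2]
      have h3 : ∀ s, (∫ θ in (0:ℝ)..(2*π), -Dθ s θ) = 0 := by
        intro s
        rw [intervalIntegral.integral_neg, hzero s, neg_zero]
      simp only [h3, intervalIntegral.integral_zero]
    have hcontF : Continuous fun θ => ∫ s in ri..r, Dr s θ := by
      apply intervalIntegral.continuous_parametric_intervalIntegral_of_continuous'
      exact contDr.comp (continuous_snd.prodMk continuous_fst)
    have hsplit : (∫ θ in (0:ℝ)..(2*π), r * Ur r θ)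
        = (∫ θ in (0:ℝ)..(2*π), ((∫ s in ri..r, Dr s θ) - ri)) := by
      apply intervalIntegral.integral_congr
      intro θ _
      have h := hFTCr θ
      rw [hbci θ] at h
      simp only []
      linarith
    rw [intervalIntegral.integral_const_mul,
      intervalIntegral.integral_sub (hcontF.intervalIntegrable 0 (2*π))
        intervalIntegrable_const, key, intervalIntegral.integral_const] at hsplit
    rw [eq_div_iff (ne_of_gt hr0), mul_comm, hsplit]
    simp only [smul_eq_mul, zero_sub, sub_zero]
  -- value of the inner θ-integral in the second term
  have hinner : ∀ r ∈ Set.Icc ri ro,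
      (∫ θ in (0:ℝ)..(2*π), deriv (fun θ' => Uθ r θ') θ / r + Ur r θ / r)
        = -(2*π*ri)/r^2 := by
    intro r hr
    have hr0 : (0:ℝ) < r := lt_of_lt_of_le hri hr.1
    have hcongr : (∫ θ in (0:ℝ)..(2*π), deriv (fun θ' => Uθ r θ') θ / r + Ur r θ / r)
        = ∫ θ in (0:ℝ)..(2*π), Dθ r θ / r + Ur r θ / r := by
      apply intervalIntegral.integral_congr
      intro θ _
      show deriv (fun θ' => Uθ r θ') θ / r + Ur r θ / r = Dθ r θ / r + Ur r θ / r
      rw [(hDθ r θ).deriv]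
    rw [hcongr]
    have hi1 : IntervalIntegrable (fun θ => Dθ r θ / r) volume 0 (2*π) :=
      ((contDθ.comp (Continuous.prodMk_right r)).div_const r).intervalIntegrable 0 (2*π)
    have hi2 : IntervalIntegrable (fun θ => Ur r θ / r) volume 0 (2*π) :=
      ((hUr.continuous.comp (Continuous.prodMk_right r)).div_const r).intervalIntegrable 0 (2*π)
    rw [intervalIntegral.integral_add hi1 hi2]
    simp only [div_eq_mul_inv]
    rw [intervalIntegral.integral_mul_const, intervalIntegral.integral_mul_const,
      hzero r]
    have h2 := hUrInt r hr
    simp only [div_eq_mul_inv] at h2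
    rw [h2]
    field_simp
    ring
  -- evaluate the second integral
  have hI2 : (∫ r in ri..ro, (v0*r*(r - ri)*(r - ro))^2 *
      (∫ θ in (0:ℝ)..(2*π),
        deriv (fun θ' => Uθ r θ') θ / r + Ur r θ / r) * r)
      = ∫ r in ri..ro,
        ((0:ℝ) + 2*(-(2*π*ri)*v0^2*(ri^2*ro^2)/2)*r
          + 3*(-(2*π*ri)*v0^2*(-2*(ri*ro^2 + ri^2*ro))/3)*r^2
          + 4*(-(2*π*ri)*v0^2*(ri^2 + 4*ri*ro + ro^2)/4)*r^3
          + 5*(-(2*π*ri)*v0^2*(-2*(ri + ro))/5)*r^4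
          + 6*(-(2*π*ri)*v0^2/6)*r^5) := by
    apply intervalIntegral.integral_congr
    intro r hrr
    rw [Set.uIcc_of_le hab'] at hrr
    have hr0 : (0:ℝ) < r := lt_of_lt_of_le hri hrr.1
    show (v0*r*(r - ri)*(r - ro))^2 *
      (∫ θ in (0:ℝ)..(2*π),
        deriv (fun θ' => Uθ r θ') θ / r + Ur r θ / r) * r = _
    rw [hinner r hrr]
    have hr0' : r ≠ 0 := ne_of_gt hr0
    field_simp
    ring
  -- evaluate the first integral
  have hI1 : (∫ r in ri..ro,
      ((deriv (fun s => v0*s*(s - ri)*(s - ro)) r)^2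
        + (v0*r*(r - ri)*(r - ro))^2/r^2) * r)
      = ∫ r in ri..ro,
        ((0:ℝ) + 2*(v0^2*(ri^2*ro^2))*r
          + 3*(v0^2*(-2*(ri*ro^2 + ri^2*ro)))*r^2
          + 4*(v0^2*(5*ri^2 + 18*ri*ro + 5*ro^2)/4)*r^3
          + 5*(v0^2*(-14*(ri + ro))/5)*r^4
          + 6*(v0^2*10/6)*r^5) := by
    apply intervalIntegral.integral_congr
    intro r hrr
    rw [Set.uIcc_of_le hab'] at hrr
    have hr0 : (0:ℝ) < r := lt_of_lt_of_le hri hrr.1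
    have hr0' : r ≠ 0 := ne_of_gt hr0
    show ((deriv (fun s => v0*s*(s - ri)*(s - ro)) r)^2
        + (v0*r*(r - ri)*(r - ro))^2/r^2) * r = _
    have hf : HasDerivAt (fun s => v0*s*(s - ri)*(s - ro))
        ((v0*1*(r - ri) + v0*r*1)*(r - ro) + v0*r*(r - ri)*1) r := by
      have h1 : HasDerivAt (fun s : ℝ => v0*s) (v0*1) r := (hasDerivAt_id r).const_mul v0
      have h2 : HasDerivAt (fun s : ℝ => s - ri) 1 r := (hasDerivAt_id r).sub_const ri
      have h3 : HasDerivAt (fun s : ℝ => s - ro) 1 r := (hasDerivAt_id r).sub_const ro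
      exact (h1.mul h2).mul h3
    rw [hf.deriv]
    field_simp
    ring
  rw [hI1, hI2, integral_poly_eval, integral_poly_eval]
  -- now a purely algebraic inequality
  subst hgap
  have hkey : 1/(2*Re) * (2*π *
      (((0:ℝ)*(ri+1) + (v0^2*(ri^2*(ri+1)^2))*(ri+1)^2
        + (v0^2*(-2*(ri*(ri+1)^2 + ri^2*(ri+1))))*(ri+1)^3
        + (v0^2*(5*ri^2 + 18*ri*(ri+1) + 5*(ri+1)^2)/4)*(ri+1)^4
        + (v0^2*(-14*(ri + (ri+1)))/5)*(ri+1)^5 + (v0^2*10/6)*(ri+1)^6)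
      - ((0:ℝ)*ri + (v0^2*(ri^2*(ri+1)^2))*ri^2
        + (v0^2*(-2*(ri*(ri+1)^2 + ri^2*(ri+1))))*ri^3
        + (v0^2*(5*ri^2 + 18*ri*(ri+1) + 5*(ri+1)^2)/4)*ri^4
        + (v0^2*(-14*(ri + (ri+1)))/5)*ri^5 + (v0^2*10/6)*ri^6)))
      + ((((0:ℝ)*(ri+1) + (-(2*π*ri)*v0^2*(ri^2*(ri+1)^2)/2)*(ri+1)^2
        + (-(2*π*ri)*v0^2*(-2*(ri*(ri+1)^2 + ri^2*(ri+1)))/3)*(ri+1)^3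
        + (-(2*π*ri)*v0^2*(ri^2 + 4*ri*(ri+1) + (ri+1)^2)/4)*(ri+1)^4
        + (-(2*π*ri)*v0^2*(-2*(ri + (ri+1)))/5)*(ri+1)^5
        + (-(2*π*ri)*v0^2/6)*(ri+1)^6)
      - ((0:ℝ)*ri + (-(2*π*ri)*v0^2*(ri^2*(ri+1)^2)/2)*ri^2
        + (-(2*π*ri)*v0^2*(-2*(ri*(ri+1)^2 + ri^2*(ri+1)))/3)*ri^3
        + (-(2*π*ri)*v0^2*(ri^2 + 4*ri*(ri+1) + (ri+1)^2)/4)*ri^4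
        + (-(2*π*ri)*v0^2*(-2*(ri + (ri+1)))/5)*ri^5
        + (-(2*π*ri)*v0^2/6)*ri^6)))
      = (π * v0^2 * (2*ri+1) / 60) * ((10*ri^2 + 10*ri + 7)/Re - 2*ri) := by
    field_simp
    ring
  rw [hkey]
  have hpos : (0:ℝ) < π * v0^2 * (2*ri+1) / 60 := by positivity
  apply mul_neg_of_pos_of_neg hpos
  rw [sub_neg]
  rw [div_lt_iff₀ hRe0]
  have h1 : (5*ri^2 + 5*(ri+1)^2 + 2)/(2*ri) < Re := hRe
  rw [div_lt_iff₀ (by positivity : (0:ℝ) < 2*ri)] at h1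
  nlinarith
end
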